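/- Let σ > 0, ν > 0 and t > 0. Let Z be a standard Gaussian random variable and let G be a Gamma(t/ν, 1/ν) distributed random variable independent of Z, and set X = σ√G · Z (the marginal of the driftless Variance Gamma process at time t). Then the kurtosis of X satisfies E[(X − E[X])⁴] / (E[(X − E[X])²])² = 3(1 + ν/t). -/

import Mathlib

/-!
Conditionally on `G`, the variable `X = σ √G Z` is a centred Gaussian of variance `σ² G`, so
independence of `G` and `Z` factors its moments: `E[X] = 0` and
`E[X^(2k)] = σ^(2k) E[G^k] E[Z^(2k)]`. The Gamma moments `E[G] = t`, `E[G²] = t (t + ν)` and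
the Gaussian moments `E[Z²] = 1`, `E[Z⁴] = 3` then give the kurtosis
`3 E[G²] / E[G]² = 3 (1 + ν / t)`.
-/

open MeasureTheory ProbabilityTheory Real Set

lemma measurable_gammaPDF (a r : ℝ) : Measurable (gammaPDF a r) :=
  (measurable_gammaPDFReal a r).ennreal_ofReal

lemma ae_nonneg_gammaMeasure (a r : ℝ) : ∀ᵐ x ∂gammaMeasure a r, 0 ≤ x := by
  rw [gammaMeasure, ae_withDensity_iff (measurable_gammaPDF a r)]
  exact ae_of_all _ fun x hx ↦ not_lt.mp fun h ↦ hx (gammaPDF_of_neg h)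

lemma integral_gammaMeasure_eq_integral_Ioi {a r : ℝ} (ha : 0 < a) (hr : 0 < r)
    (f : ℝ → ℝ) :
    ∫ x, f x ∂gammaMeasure a r =
      ∫ x in Ioi 0, r ^ a / Gamma a * x ^ (a - 1) * exp (-(r * x)) * f x := by
  rw [gammaMeasure, integral_withDensity_eq_integral_toReal_smul (measurable_gammaPDF a r)
    (ae_of_all _ fun _ ↦ ENNReal.ofReal_lt_top), ← integral_Ici_eq_integral_Ioi,
    ← setIntegral_eq_integral_of_forall_compl_eq_zero (s := Ici 0)]
  · refine setIntegral_congr_fun measurableSet_Ici fun x (hx : 0 ≤ x) ↦ ?_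
    rw [gammaPDF, ENNReal.toReal_ofReal (gammaPDFReal_nonneg ha hr x), gammaPDFReal, if_pos hx,
      smul_eq_mul]
  · intro x (hx : ¬ 0 ≤ x)
    rw [gammaPDF_of_neg (not_le.mp hx), ENNReal.toReal_zero, zero_smul]

lemma integral_pow_gammaMeasure {a r : ℝ} (ha : 0 < a) (hr : 0 < r) (n : ℕ) :
    ∫ x, x ^ n ∂gammaMeasure a r = Gamma (a + n) / (Gamma a * r ^ n) := by
  rw [integral_gammaMeasure_eq_integral_Ioi ha hr]
  have hxn : ∀ x ∈ Ioi (0 : ℝ), r ^ a / Gamma a * x ^ (a - 1) * exp (-(r * x)) * x ^ n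
      = r ^ a / Gamma a * (x ^ (a + n - 1) * exp (-(r * x))) := fun x (hx : 0 < x) ↦ by
    rw [add_sub_right_comm, rpow_add hx, rpow_natCast]; ring
  rw [setIntegral_congr_fun measurableSet_Ioi hxn, integral_const_mul,
    integral_rpow_mul_exp_neg_mul_Ioi (by positivity) hr, div_rpow zero_le_one hr.le, one_rpow,
    rpow_add hr, rpow_natCast]
  have := (Gamma_pos_of_pos ha).ne'
  field_simp

lemma integral_id_gammaMeasure {a r : ℝ} (ha : 0 < a) (hr : 0 < r) :
    ∫ x, x ∂gammaMeasure a r = a / r := by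
  have h := integral_pow_gammaMeasure ha hr 1
  simp only [pow_one, Nat.cast_one, Gamma_add_one ha.ne'] at h
  have := (Gamma_pos_of_pos ha).ne'
  rw [h]
  field_simp

lemma integral_sq_gammaMeasure {a r : ℝ} (ha : 0 < a) (hr : 0 < r) :
    ∫ x, x ^ 2 ∂gammaMeasure a r = a * (a + 1) / r ^ 2 := by
  rw [integral_pow_gammaMeasure ha hr, Nat.cast_two, show a + 2 = a + 1 + 1 by ring,
    Gamma_add_one (by positivity), Gamma_add_one ha.ne']
  have := (Gamma_pos_of_pos ha).ne'
  field_simp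

lemma integral_pow_two_mul_gaussianReal (k : ℕ) :
    ∫ x, x ^ (2 * k) ∂gaussianReal 0 1 = 2 ^ k * Gamma (k + 1 / 2) / √π := by
  set g : ℝ → ℝ := fun y ↦ y ^ (2 * k) * exp (-(1 / 2) * y ^ (2 : ℝ)) with hg
  have hpdf (x : ℝ) : gaussianPDFReal 0 1 x • x ^ (2 * k) = (√(2 * π))⁻¹ * g |x| := by
    simp only [hg, gaussianPDFReal_def, smul_eq_mul, NNReal.coe_one, mul_one, sub_zero, rpow_two,
      sq_abs, pow_mul]
    ring_nf
  have hIoi : ∫ y in Ioi 0, g y =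
      (1 / 2) ^ (-((2 * k : ℕ) + 1) / 2 : ℝ) * (1 / 2) * Gamma (((2 * k : ℕ) + 1) / 2) := by
    rw [← integral_rpow_mul_exp_neg_mul_rpow two_pos
      (neg_one_lt_zero.trans_le (Nat.cast_nonneg _)) one_half_pos]
    simp_rw [hg, rpow_natCast]
  have hpow : (1 / 2 : ℝ) ^ (-((2 * k : ℕ) + 1) / 2 : ℝ) = 2 ^ k * √2 := by
    rw [one_div, inv_rpow zero_le_two, ← rpow_neg zero_le_two, neg_div, neg_neg, Nat.cast_mul,
      Nat.cast_two, add_div, mul_div_cancel_left₀ _ two_ne_zero, rpow_add two_pos, rpow_natCast,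
      ← sqrt_eq_rpow]
  rw [integral_gaussianReal_eq_integral_smul one_ne_zero, funext hpdf, integral_const_mul,
    integral_comp_abs, hIoi, hpow, Nat.cast_mul, Nat.cast_two, sqrt_mul zero_le_two,
    show (2 * (k : ℝ) + 1) / 2 = k + 1 / 2 by ring]
  have : √2 ≠ 0 := by positivity
  have : √π ≠ 0 := by positivity
  field_simp

lemma integral_sq_gaussianReal : ∫ x, x ^ 2 ∂gaussianReal 0 1 = 1 := by
  have h := integral_pow_two_mul_gaussianReal 1
  rw [Nat.cast_one, pow_one, add_comm, Gamma_add_one one_half_pos.ne', Gamma_one_half_eq] at h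
  have : √π ≠ 0 := by positivity
  rw [h]
  field_simp

lemma integral_pow_four_gaussianReal : ∫ x, x ^ 4 ∂gaussianReal 0 1 = 3 := by
  have h := integral_pow_two_mul_gaussianReal 2
  rw [Nat.cast_two, show (2 : ℝ) + 1 / 2 = 1 / 2 + 1 + 1 by norm_num,
    Gamma_add_one (by norm_num), Gamma_add_one one_half_pos.ne', Gamma_one_half_eq] at h
  have : √π ≠ 0 := by positivity
  rw [h]
  field_simp
  norm_num

lemma integral_mul_sqrt_mul_pow {Ω : Type*} {mΩ : MeasurableSpace Ω} {P : Measure Ω}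
    {G Z : Ω → ℝ} {μG μZ : Measure ℝ} (hG : HasLaw G μG P) (hZ : HasLaw Z μZ P)
    (hGZ : G ⟂ᵢ[P] Z) (σ : ℝ) (n : ℕ) :
    ∫ ω, (σ * √(G ω) * Z ω) ^ n ∂P = σ ^ n * (∫ x, √x ^ n ∂μG) * ∫ z, z ^ n ∂μZ := by
  have hprod := hGZ.integral_fun_comp_mul_comp hG.aemeasurable hZ.aemeasurable
    (f := fun x ↦ σ ^ n * √x ^ n) (g := fun z ↦ z ^ n) (by fun_prop) (by fun_prop)
  simp only [mul_pow] at hprod ⊢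
  rw [hprod, integral_const_mul, ← hG.integral_comp (by fun_prop),
    ← hZ.integral_comp (by fun_prop)]
  rfl

lemma integral_sqrt_pow_two_mul {μ : Measure ℝ} (h : ∀ᵐ x ∂μ, 0 ≤ x) (k : ℕ) :
    ∫ x, √x ^ (2 * k) ∂μ = ∫ x, x ^ k ∂μ :=
  integral_congr_ae (h.mono fun x hx ↦ by simp only [pow_mul, sq_sqrt hx])

theorem varianceGammaProcess_kurtosis_general
    {Ω : Type*} [MeasurableSpace Ω] (P : Measure Ω)
    (σ ν t : ℝ) (hσ : 0 < σ) (hν : 0 < ν) (ht : 0 < t)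
    (G Z : Ω → ℝ) (hGm : Measurable G) (hZm : Measurable Z)
    (hG : Measure.map G P = gammaMeasure (t / ν) (1 / ν))
    (hZ : Measure.map Z P = gaussianReal 0 1)
    (hindep : IndepFun G Z P) :
    (∫ ω, (σ * Real.sqrt (G ω) * Z ω
        - ∫ ω', σ * Real.sqrt (G ω') * Z ω' ∂P) ^ 4 ∂P)
      / (∫ ω, (σ * Real.sqrt (G ω) * Z ω
        - ∫ ω', σ * Real.sqrt (G ω') * Z ω' ∂P) ^ 2 ∂P) ^ 2
      = 3 * (1 + ν / t) := by
  have ha : 0 < t / ν := by positivity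
  have hr : 0 < 1 / ν := by positivity
  have hmoment :=
    integral_mul_sqrt_mul_pow ⟨hGm.aemeasurable, hG⟩ ⟨hZm.aemeasurable, hZ⟩ hindep σ
  have hsqrt := integral_sqrt_pow_two_mul (ae_nonneg_gammaMeasure (t / ν) (1 / ν))
  have hmean : ∫ ω, σ * √(G ω) * Z ω ∂P = 0 := by
    simpa [integral_id_gaussianReal] using hmoment 1
  have h2 : ∫ ω, (σ * √(G ω) * Z ω) ^ 2 ∂P = σ ^ 2 * t := by
    simp only [hmoment 2, hsqrt 1, pow_one, integral_id_gammaMeasure ha hr,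
      integral_sq_gaussianReal]
    field_simp
  have h4 : ∫ ω, (σ * √(G ω) * Z ω) ^ 4 ∂P = 3 * σ ^ 4 * t * (t + ν) := by
    rw [hmoment 4, hsqrt 2, integral_sq_gammaMeasure ha hr, integral_pow_four_gaussianReal]
    field_simp
  simp only [hmean, sub_zero, h2, h4]
  field_simp

/-- The driftless Variance Gamma process marginal `X = σ√G ⬝ Z` at time
`t`, with `G ~ Gamma(t/ν, 1/ν)` independent of the standard Gaussian `Z`, has kurtosis
`3(1 + ν/t)`. -/
theorem varianceGammaProcess_kurtosis
    {Ω : Type*} [MeasurableSpace Ω] (P : Measure Ω) [IsProbabilityMeasure P]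
    (σ ν t : ℝ) (hσ : 0 < σ) (hν : 0 < ν) (ht : 0 < t)
    (G Z : Ω → ℝ) (hGm : Measurable G) (hZm : Measurable Z)
    (hG : Measure.map G P = gammaMeasure (t / ν) (1 / ν))
    (hZ : Measure.map Z P = gaussianReal 0 1)
    (hindep : IndepFun G Z P) :
    (∫ ω, (σ * Real.sqrt (G ω) * Z ω
        - ∫ ω', σ * Real.sqrt (G ω') * Z ω' ∂P) ^ 4 ∂P)
      / (∫ ω, (σ * Real.sqrt (G ω) * Z ω
        - ∫ ω', σ * Real.sqrt (G ω') * Z ω' ∂P) ^ 2 ∂P) ^ 2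
      = 3 * (1 + ν / t) :=
  varianceGammaProcess_kurtosis_general P σ ν t hσ hν ht G Z hGm hZm hG hZ hindep
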